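/- arXiv:2503.24186 — 2 statements merged into one kernel-verified Lean document; each statement's English description precedes it below -/
import Mathlib

section
/- Let R be a commutative Noetherian ring, M a finitely generated R-module, S a multiplicatively closed subset of R, and n ≥ 1. Then S^{-1}(ca_R^n(M)) = ca_{S^{-1}R}^n(S^{-1}M). -/
open CategoryTheory

noncomputable section

universe u

variable (R : Type u) [CommRing R]

/-- The `n`-th Ext group of two `R`-modules, as an `R`-module. -/
abbrev ExtM (n : ℕ) (M N : ModuleCat.{u} R) : ModuleCat.{u} R :=
  ((Ext R (ModuleCat.{u} R) n).obj (Opposite.op M)).obj N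

/-- The `n`-th cohomological annihilator of a module `M`:
elements `r` with `r • Ext^i(M, N) = 0` for all `i ≥ n` and all finitely generated `N`. -/
def caN (n : ℕ) (M : ModuleCat.{u} R) : Ideal R where
  carrier := {r | ∀ i, n ≤ i → ∀ N : ModuleCat.{u} R, Module.Finite R N →
    ∀ x : ExtM R i M N, r • x = 0}
  zero_mem' := by intro i _ N _ x; simp
  add_mem' := by
    intro a b ha hb i hi N hN x
    rw [add_smul, ha i hi N hN x, hb i hi N hN x, add_zero]
  smul_mem' := by
    intro c r hr i hi N hN x
    simp only [smul_eq_mul, mul_smul, hr i hi N hN x, smul_zero]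

/-- The cohomological annihilator `ca_R(M) = ⋃ₙ ca_R^n(M)`. -/
def ca (M : ModuleCat.{u} R) : Set R := ⋃ n : ℕ, (caN R n M : Set R)

/-- The `n`-th co-cohomological annihilator of a module `M`. -/
def cocaN (n : ℕ) (M : ModuleCat.{u} R) : Ideal R where
  carrier := {r | ∀ i, n ≤ i → ∀ N : ModuleCat.{u} R, Module.Finite R N →
    ∀ x : ExtM R i N M, r • x = 0}
  zero_mem' := by intro i _ N _ x; simp
  add_mem' := by
    intro a b ha hb i hi N hN x
    rw [add_smul, ha i hi N hN x, hb i hi N hN x, add_zero]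
  smul_mem' := by
    intro c r hr i hi N hN x
    simp only [smul_eq_mul, mul_smul, hr i hi N hN x, smul_zero]

/-- The co-cohomological annihilator `coca_R(M) = ⋃ₙ coca_R^n(M)`. -/
def coca (M : ModuleCat.{u} R) : Set R := ⋃ n : ℕ, (cocaN R n M : Set R)

/-- `M` has projective dimension at most `n`: `Ext^i(M, -) = 0` for all `i > n`. -/
def projDimLE (n : ℕ) (M : ModuleCat.{u} R) : Prop :=
  ∀ i : ℕ, n < i → ∀ N : ModuleCat.{u} R, Subsingleton (ExtM R i M N)

/-- `M` has injective dimension at most `n`: `Ext^i(-, M) = 0` for all `i > n`. -/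
def injDimLE (n : ℕ) (M : ModuleCat.{u} R) : Prop :=
  ∀ i : ℕ, n < i → ∀ N : ModuleCat.{u} R, Subsingleton (ExtM R i N M)

/-- `K` is an `n`-th syzygy of `M` with respect to resolutions by
finitely generated projective modules. -/
def IsSyz : ℕ → ModuleCat.{u} R → ModuleCat.{u} R → Prop
  | 0, M, K => Nonempty (K ≃ₗ[R] M)
  | n + 1, M, K => ∃ (L P : ModuleCat.{u} R), IsSyz n M L ∧
      Module.Finite R P ∧ Module.Projective R P ∧
      ∃ f : P →ₗ[R] L, Function.Surjective f ∧ Nonempty (K ≃ₗ[R] LinearMap.ker f)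

/-- `X` is a direct summand of `Y`. -/
def IsSummand (X Y : ModuleCat.{u} R) : Prop :=
  ∃ (i : X →ₗ[R] Y) (p : Y →ₗ[R] X), p.comp i = LinearMap.id

/-- `X` is a direct summand of a finite direct sum of copies of `G`. -/
def IsSummandOfCopies (G X : ModuleCat.{u} R) : Prop :=
  ∃ k : ℕ, IsSummand R X (ModuleCat.of R (Fin k → G))

/-- The subcategories `thickⁿ(G)` of `mod R`. -/
def thickN (G : ModuleCat.{u} R) : ℕ → Set (ModuleCat.{u} R)
  | 0 => {X | Subsingleton X}
  | n + 1 => {X | ∃ (Y Y₁ Y₂ : ModuleCat.{u} R) (f : Y₁ →ₗ[R] Y) (g : Y →ₗ[R] Y₂),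
      Function.Injective f ∧ Function.Surjective g ∧ LinearMap.ker g = LinearMap.range f ∧
      ((Y₁ ∈ thickN G n ∧ IsSummandOfCopies R G Y₂) ∨
        (IsSummandOfCopies R G Y₁ ∧ Y₂ ∈ thickN G n)) ∧
      IsSummand R X Y}

/-- The balls `|G|ₙ` of Dao–Takahashi. -/
def ballN (G : ModuleCat.{u} R) : ℕ → Set (ModuleCat.{u} R)
  | 0 => {X | Subsingleton X}
  | n + 1 => {Y | ∃ (Y' Y₁ Y₂ : ModuleCat.{u} R)
      (f : Y₁ →ₗ[R] (ModuleCat.of R (Y × Y'))) (g : (ModuleCat.of R (Y × Y')) →ₗ[R] Y₂),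
      Function.Injective f ∧ Function.Surjective g ∧ LinearMap.ker g = LinearMap.range f ∧
      Y₁ ∈ ballN G n ∧ IsSummandOfCopies R G Y₂}

/-- A regular local ring: a Noetherian local ring whose maximal ideal can be
generated by `dim R` elements. -/
def IsRegularLocal (A : Type u) [CommRing A] [IsLocalRing A] : Prop :=
  IsNoetherianRing A ∧ ∃ s : Finset A, Ideal.span (↑s : Set A) = IsLocalRing.maximalIdeal A ∧
    (s.card : WithBot ℕ∞) = ringKrullDim A

/-- The localization of a module at a prime, as a module category object over the local ring. -/
abbrev locMod (p : PrimeSpectrum R) (M : ModuleCat.{u} R) :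
    ModuleCat.{u} (Localization.AtPrime p.asIdeal) :=
  ModuleCat.of (Localization.AtPrime p.asIdeal) (LocalizedModule p.asIdeal.primeCompl M)

/-- Depth of a module over a local ring, via vanishing of `Ext` from the residue field. -/
def depthE (A : Type u) [CommRing A] [IsLocalRing A] (N : ModuleCat.{u} A) : ℕ∞ :=
  sInf ((fun n : ℕ => (n : ℕ∞)) ''
    {n : ℕ | ¬ Subsingleton (ExtM A n (ModuleCat.of A (IsLocalRing.ResidueField A)) N)})

/-- The large restricted flat dimension of `M`. -/
def rfdE (M : ModuleCat.{u} R) : ℕ∞ :=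
  ⨆ p : PrimeSpectrum R,
    (depthE (Localization.AtPrime p.asIdeal)
        (ModuleCat.of (Localization.AtPrime p.asIdeal) (Localization.AtPrime p.asIdeal)) -
      depthE (Localization.AtPrime p.asIdeal) (locMod R p M))

/-- `r • f` factors through a finitely generated projective module. -/
def FactorsThroughProj (M : ModuleCat.{u} R) (f : M →ₗ[R] M) : Prop :=
  ∃ P : ModuleCat.{u} R, Module.Projective R P ∧ Module.Finite R P ∧
    ∃ (g : M →ₗ[R] P) (h : P →ₗ[R] M), h.comp g = f

/-- The annihilator of the stable endomorphism ring of `M`. -/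
def annStableEnd (M : ModuleCat.{u} R) : Set R :=
  {r | ∀ f : M →ₗ[R] M, FactorsThroughProj R M (r • f)}

/-- A resolving subcategory of `mod R`. -/
def IsResolving (C : Set (ModuleCat.{u} R)) : Prop :=
  (∀ P : ModuleCat.{u} R, Module.Finite R P → Module.Projective R P → P ∈ C) ∧
  (∀ X Y : ModuleCat.{u} R, Y ∈ C → IsSummand R X Y → X ∈ C) ∧
  (∀ (Y Y₁ Y₂ : ModuleCat.{u} R) (f : Y₁ →ₗ[R] Y) (g : Y →ₗ[R] Y₂),
    Function.Injective f → Function.Surjective g → LinearMap.ker g = LinearMap.range f →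
    Y₁ ∈ C → Y₂ ∈ C → Y ∈ C) ∧
  (∀ X ∈ C, ∀ K : ModuleCat.{u} R, IsSyz R 1 X K → K ∈ C)

/-- The smallest resolving subcategory containing `G`. -/
def resCl (G : ModuleCat.{u} R) : Set (ModuleCat.{u} R) :=
  ⋂₀ {C | IsResolving R C ∧ G ∈ C}

end

/-!
Fix a resolution `P` of `M` by finitely generated projectives, and let `K = im (P_{j+1} → P_j)`
be its `j`-th syzygy. Then `r ∈ ca^{j+1}(M)` iff `r • id_K` extends to a map `P_j → K`:
necessity by taking `N = K` and the class of `P_{j+1} ↠ K` in `Ext^{j+1}(M, K)`, sufficiency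
because by projectivity such an extension shifts to every higher syzygy, and an extension for
`K` turns every `(j+1)`-cocycle into `r` times a coboundary. Over a Noetherian ring `M` has a
resolution by finite free modules; it localizes to a resolution of `S⁻¹M` with syzygy `S⁻¹K`,
and the extension condition localizes: an extension over `S⁻¹R` lifts to `P_j → K` up to a
denominator since `P_j` is finitely presented, and the lift agrees with `r • id_K` up to another
denominator since `K` is finitely generated.
-/

universe u

section ExtAnnihilator

variable {A : Type u} [CommRing A]

lemma CategoryTheory.ShortComplex.moduleCat_mem_annihilator_homology_iff
    (T : ShortComplex (ModuleCat.{u} A)) (r : A) :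
    r ∈ Module.annihilator A T.homology ↔ ∀ y : T.X₂, T.g y = 0 → ∃ x : T.X₁, T.f x = r • y := by
  rw [T.moduleCatHomologyIso.toLinearEquiv.annihilator_eq, Module.mem_annihilator]
  constructor
  · intro h y hy
    obtain ⟨x, hx⟩ := (Submodule.Quotient.mk_eq_zero _).mp
      (h (Submodule.Quotient.mk (p := T.moduleCatToCycles.range) ⟨y, hy⟩))
    exact ⟨x, congrArg Subtype.val hx⟩
  · rintro h z
    obtain ⟨⟨y, hy⟩, rfl⟩ := Submodule.Quotient.mk_surjective _ z
    obtain ⟨x, hx⟩ := h y hy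
    exact (Submodule.Quotient.mk_eq_zero _).mpr ⟨x, Subtype.ext hx⟩

lemma CategoryTheory.ProjectiveResolution.mem_annihilator_ext_succ_iff {W : ModuleCat.{u} A}
    (P : ProjectiveResolution W) (N : ModuleCat.{u} A) (j : ℕ) (r : A) :
    r ∈ Module.annihilator A (ExtM A (j + 1) W N) ↔
      ∀ ψ : P.complex.X (j + 1) →ₗ[A] N, ψ ∘ₗ (P.complex.d (j + 2) (j + 1)).hom = 0 →
        ∃ χ : P.complex.X j →ₗ[A] N, χ ∘ₗ (P.complex.d (j + 1) j).hom = r • ψ := by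
  let e := P.isoExt (j + 1) N ≪≫ ShortComplex.homologyMapIso
    ((P.complex.linearYonedaObj A N).isoSc' j (j + 1) (j + 2) (by simp) (by simp))
  rw [e.toLinearEquiv.annihilator_eq, ShortComplex.moduleCat_mem_annihilator_homology_iff]
  constructor
  · intro h ψ hψ
    obtain ⟨χ, hχ⟩ := h (ModuleCat.ofHom ψ) (ModuleCat.hom_ext hψ)
    exact ⟨χ.hom, congrArg ModuleCat.Hom.hom hχ⟩
  · intro h ψ hψ
    obtain ⟨χ, hχ⟩ := h ψ.hom (congrArg ModuleCat.Hom.hom hψ)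
    exact ⟨ModuleCat.ofHom χ, ModuleCat.hom_ext hχ⟩

end ExtAnnihilator

section RetractionIdeal

variable {A : Type u} [CommRing A] {V : Type*} [AddCommGroup V] [Module A V]

def Submodule.retractionIdeal (K : Submodule A V) : Ideal A where
  carrier := {r | ∃ φ : V →ₗ[A] K, φ ∘ₗ K.subtype = r • LinearMap.id}
  zero_mem' := ⟨0, by simp⟩
  add_mem' := by
    rintro a b ⟨φ, hφ⟩ ⟨ψ, hψ⟩
    exact ⟨φ + ψ, by rw [LinearMap.add_comp, hφ, hψ, add_smul]⟩
  smul_mem' := by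
    rintro c r ⟨φ, hφ⟩
    exact ⟨c • φ, by rw [LinearMap.smul_comp, hφ, smul_smul, smul_eq_mul]⟩

lemma Submodule.mem_retractionIdeal {K : Submodule A V} {r : A} :
    r ∈ K.retractionIdeal ↔ ∃ φ : V →ₗ[A] K, φ ∘ₗ K.subtype = r • LinearMap.id :=
  Iff.rfl

variable {V₁ V₂ : Type*} [AddCommGroup V₁] [Module A V₁] [AddCommGroup V₂] [Module A V₂]
  {f : V₂ →ₗ[A] V₁} {g : V₁ →ₗ[A] V}

/-- If `φ : V → range g` restricts to `r • id` and `ℓ : V → V₁` lifts it, then `r • id - ℓ ∘ g`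
lands in `ker g = range f` and restricts to `r • id` there. -/
lemma Function.Exact.retractionIdeal_range_le [Module.Projective A V] (hfg : Function.Exact f g) :
    (LinearMap.range g).retractionIdeal ≤ (LinearMap.range f).retractionIdeal := by
  rintro r ⟨φ, hφ⟩
  obtain ⟨ℓ, hℓ⟩ := Module.projective_lifting_property g.rangeRestrict φ g.surjective_rangeRestrict
  have hgℓ (x : V₁) : g (ℓ (g x)) = r • g x :=
    congr(($hℓ (g x) : V)).trans congr(($hφ ⟨g x, LinearMap.mem_range_self g x⟩ : V))
  let θ : V₁ →ₗ[A] V₁ := r • LinearMap.id - ℓ ∘ₗ g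
  have hθ (x : V₁) : θ x ∈ LinearMap.range f := by
    rw [← hfg.linearMap_ker_eq, LinearMap.mem_ker]
    simp [θ, hgℓ]
  refine ⟨θ.codRestrict _ hθ, ?_⟩
  ext ⟨_, y, rfl⟩
  simp [θ, hfg.apply_apply_eq_zero]

lemma Function.Exact.exists_comp_eq_smul_of_mem_retractionIdeal {N : Type*} [AddCommGroup N]
    [Module A N] (hfg : Function.Exact f g) {r : A} (hr : r ∈ (LinearMap.range g).retractionIdeal)
    (ψ : V₁ →ₗ[A] N) (hψ : ψ ∘ₗ f = 0) : ∃ χ : V →ₗ[A] N, χ ∘ₗ g = r • ψ := by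
  obtain ⟨φ, hφ⟩ := hr
  have hfg' : Function.Exact f g.rangeRestrict := fun x => Subtype.ext_iff.trans (hfg x)
  let ψ' : LinearMap.range g →ₗ[A] N := (LinearMap.range f).liftQ ψ (by
      rintro _ ⟨y, rfl⟩; exact congr($hψ y)) ∘ₗ
    (hfg'.linearEquivOfSurjective g.surjective_rangeRestrict).symm.toLinearMap
  have hψ' (x : V₁) : ψ' (g.rangeRestrict x) = ψ x := by simp [ψ']
  refine ⟨ψ' ∘ₗ φ, LinearMap.ext fun x => ?_⟩
  have : φ (g x) = r • g.rangeRestrict x := congr($hφ (g.rangeRestrict x))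
  simp [this, ← hψ']

lemma LinearMap.mem_retractionIdeal_range_of_comp_eq_smul {r : A} (φ : V →ₗ[A] LinearMap.range g)
    (h : φ ∘ₗ g = r • g.rangeRestrict) : r ∈ (LinearMap.range g).retractionIdeal := by
  refine ⟨φ, LinearMap.ext fun ⟨_, x, rfl⟩ => ?_⟩
  exact congr($h x)

end RetractionIdeal

section LinearResolution

variable {A : Type u} [CommRing A]

structure LinearResolution (W : ModuleCat.{u} A) where
  X : ℕ → ModuleCat.{u} A
  d : ∀ n, X (n + 1) →ₗ[A] X n
  π : X 0 →ₗ[A] W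
  surjective_π : Function.Surjective π
  exact_zero : Function.Exact (d 0) π
  exact_succ : ∀ n, Function.Exact (d (n + 1)) (d n)

namespace LinearResolution

variable {W : ModuleCat.{u} A} (E : LinearResolution W)

def complex : ChainComplex (ModuleCat.{u} A) ℕ :=
  ChainComplex.of E.X (fun n => ModuleCat.ofHom (E.d n))
    (fun n => ModuleCat.hom_ext (LinearMap.ext (E.exact_succ n).apply_apply_eq_zero))

lemma complex_d_succ (n : ℕ) : E.complex.d (n + 1) n = ModuleCat.ofHom (E.d n) :=
  ChainComplex.of_d E.X (fun n => ModuleCat.ofHom (E.d n)) n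

noncomputable def toProjectiveResolution [∀ n, Module.Projective A (E.X n)] :
    ProjectiveResolution W where
  complex := E.complex
  projective n := inferInstanceAs (Projective (E.X n))
  π := (ChainComplex.toSingle₀Equiv _ _).symm ⟨ModuleCat.ofHom E.π, by
    rw [complex_d_succ]
    exact ModuleCat.hom_ext (LinearMap.ext E.exact_zero.apply_apply_eq_zero)⟩
  quasiIso := ⟨fun n => by
    cases n with
    | zero =>
      rw [ChainComplex.quasiIsoAt₀_iff, ShortComplex.quasiIso_iff_of_zeros']
      · refine ⟨?_, (ModuleCat.epi_iff_surjective _).2 E.surjective_π⟩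
        rw [ShortComplex.ShortExact.moduleCat_exact_iff_function_exact]
        exact E.exact_zero
      all_goals rfl
    | succ n =>
      rw [quasiIsoAt_iff_exactAt' _ _ (ChainComplex.exactAt_succ_single_obj _ _),
        HomologicalComplex.exactAt_iff' _ (n + 1 + 1) (n + 1) n (by simp) (by simp),
        ShortComplex.ShortExact.moduleCat_exact_iff_function_exact]
      simp only [HomologicalComplex.sc', HomologicalComplex.shortComplexFunctor', complex_d_succ]
      exact E.exact_succ n⟩

variable [∀ n, Module.Projective A (E.X n)]

lemma mem_annihilator_ext_succ_iff (N : ModuleCat.{u} A) (j : ℕ) (r : A) :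
    r ∈ Module.annihilator A (ExtM A (j + 1) W N) ↔
      ∀ ψ : E.X (j + 1) →ₗ[A] N, ψ ∘ₗ E.d (j + 1) = 0 →
        ∃ χ : E.X j →ₗ[A] N, χ ∘ₗ E.d j = r • ψ := by
  rw [E.toProjectiveResolution.mem_annihilator_ext_succ_iff]
  simp only [toProjectiveResolution, complex_d_succ]
  rfl

lemma monotone_retractionIdeal_range_d :
    Monotone fun j => (LinearMap.range (E.d j)).retractionIdeal :=
  monotone_nat_of_le_succ fun j => (E.exact_succ j).retractionIdeal_range_le

theorem caN_succ_eq_retractionIdeal (j : ℕ) [Module.Finite A (E.X (j + 1))] :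
    caN A (j + 1) W = (LinearMap.range (E.d j)).retractionIdeal := by
  ext r
  constructor
  · intro hr
    have hK := hr (j + 1) le_rfl (ModuleCat.of A (LinearMap.range (E.d j))) inferInstance
    obtain ⟨χ, hχ⟩ := (E.mem_annihilator_ext_succ_iff _ j r).mp (Module.mem_annihilator.mpr hK)
      (E.d j).rangeRestrict
      (LinearMap.ext fun x => Subtype.ext ((E.exact_succ j).apply_apply_eq_zero x))
    exact LinearMap.mem_retractionIdeal_range_of_comp_eq_smul χ hχ
  · intro hr i hi N _
    obtain ⟨k, rfl⟩ : ∃ k, i = k + 1 := ⟨i - 1, by omega⟩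
    refine Module.mem_annihilator.mp ((E.mem_annihilator_ext_succ_iff N k r).mpr fun ψ hψ => ?_)
    exact (E.exact_succ k).exists_comp_eq_smul_of_mem_retractionIdeal
      (E.monotone_retractionIdeal_range_d (by omega : j ≤ k) hr) ψ hψ

end LinearResolution

end LinearResolution

section Localization

variable {R : Type u} [CommRing R] (S : Submonoid R) {V : Type u} [AddCommGroup V] [Module R V]

local notation "Rₛ" => Localization S

lemma Submodule.algebraMap_mem_retractionIdeal_localized' {K : Submodule R V} {r : R}
    (hr : r ∈ K.retractionIdeal) :
    algebraMap R Rₛ r ∈ (K.localized' Rₛ S (LocalizedModule.mkLinearMap S V)).retractionIdeal := by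
  obtain ⟨φ, hφ⟩ := hr
  set f := LocalizedModule.mkLinearMap S V
  set Kₛ := K.localized' Rₛ S f
  let φₛ := IsLocalizedModule.mapExtendScalars S f (K.toLocalized' Rₛ S f) Rₛ φ
  refine ⟨φₛ, LinearMap.restrictScalars_injective R ?_⟩
  apply IsLocalizedModule.linearMap_ext S (K.toLocalized' Rₛ S f) (K.toLocalized' Rₛ S f)
  ext k
  have hk : φ k = r • k := congr($hφ k)
  simp [φₛ, Kₛ, hk, algebraMap_smul]

lemma Submodule.mem_map_retractionIdeal_of_mem_retractionIdeal_localized'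
    [Module.FinitePresentation R V] {K : Submodule R V} [Module.Finite R K] {x : Rₛ}
    (hx : x ∈ (K.localized' Rₛ S (LocalizedModule.mkLinearMap S V)).retractionIdeal) :
    x ∈ K.retractionIdeal.map (algebraMap R Rₛ) := by
  obtain ⟨φₛ, hφₛ⟩ := hx
  set f := LocalizedModule.mkLinearMap S V
  let ι := K.toLocalized' Rₛ S f
  obtain ⟨ψ, s₀, hψ⟩ :=
    Module.FinitePresentation.exists_lift_of_isLocalizedModule S ι (φₛ.restrictScalars R ∘ₗ f)
  obtain ⟨⟨r, s⟩, rfl⟩ := IsLocalization.mk'_surjective S x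
  have key : ι ∘ₗ ((s : R) • ψ ∘ₗ K.subtype) = ι ∘ₗ (((s₀ : R) * r) • LinearMap.id) := by
    refine LinearMap.ext fun k => ?_
    have h₁ : ι (ψ k) = (s₀ : R) • φₛ (f k) := congr($hψ k)
    have h₂ : φₛ (f k) = IsLocalization.mk' Rₛ r s • ι k := congr($hφₛ (ι k))
    simp only [LinearMap.comp_apply, LinearMap.smul_apply, LinearMap.id_apply, map_smul,
      Submodule.subtype_apply, h₁, h₂]
    rw [smul_comm, ← algebraMap_smul Rₛ (s : R), smul_smul, mul_comm, IsLocalization.mk'_spec,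
      algebraMap_smul, mul_smul]
  obtain ⟨u, hu⟩ := Module.Finite.exists_smul_of_comp_eq_of_isLocalizedModule S ι _ _ key
  rw [IsLocalization.mem_map_algebraMap_iff S]
  refine ⟨⟨⟨u * s₀ * r, mem_retractionIdeal.mpr ⟨(u * s : R) • ψ, ?_⟩⟩, u * s₀ * s⟩, ?_⟩
  · simpa [Submonoid.smul_def, mul_smul, LinearMap.smul_comp, mul_assoc] using hu
  · simp only [Submonoid.coe_mul, map_mul]
    linear_combination (algebraMap R Rₛ u * algebraMap R Rₛ s₀) * IsLocalization.mk'_spec Rₛ r s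

theorem Submodule.map_retractionIdeal_localized' [Module.FinitePresentation R V]
    (K : Submodule R V) [Module.Finite R K] :
    K.retractionIdeal.map (algebraMap R Rₛ) =
      (K.localized' Rₛ S (LocalizedModule.mkLinearMap S V)).retractionIdeal :=
  le_antisymm (Ideal.map_le_iff_le_comap.mpr fun _ => algebraMap_mem_retractionIdeal_localized' S)
    fun _ => mem_map_retractionIdeal_of_mem_retractionIdeal_localized' S

end Localization

namespace LinearResolution

variable {R : Type u} [CommRing R] (S : Submonoid R) {W : ModuleCat.{u} R}
  (E : LinearResolution W)

noncomputable abbrev localized :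
    LinearResolution (ModuleCat.of (Localization S) (LocalizedModule S W)) where
  X n := ModuleCat.of (Localization S) (LocalizedModule S (E.X n))
  d n := LocalizedModule.map S (E.d n)
  π := LocalizedModule.map S E.π
  surjective_π := IsLocalizedModule.map_surjective S (LocalizedModule.mkLinearMap S _)
    (LocalizedModule.mkLinearMap S _) _ E.surjective_π
  exact_zero := IsLocalizedModule.map_exact S (LocalizedModule.mkLinearMap S _)
    (LocalizedModule.mkLinearMap S _) (LocalizedModule.mkLinearMap S _) _ _ E.exact_zero
  exact_succ n := IsLocalizedModule.map_exact S (LocalizedModule.mkLinearMap S _)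
    (LocalizedModule.mkLinearMap S _) (LocalizedModule.mkLinearMap S _) _ _ (E.exact_succ n)

instance [∀ n, Module.Projective R (E.X n)] (n : ℕ) :
    Module.Projective (Localization S) ((E.localized S).X n) :=
  Module.projective_of_isLocalizedModule S (LocalizedModule.mkLinearMap S (E.X n))

instance [∀ n, Module.Finite R (E.X n)] (n : ℕ) :
    Module.Finite (Localization S) ((E.localized S).X n) :=
  Module.Finite.of_isLocalizedModule S (LocalizedModule.mkLinearMap S (E.X n))

lemma range_localized_d (n : ℕ) :
    LinearMap.range ((E.localized S).d n) =
      (LinearMap.range (E.d n)).localized' (Localization S) S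
        (LocalizedModule.mkLinearMap S (E.X n)) :=
  (LinearMap.localized'_range_eq_range_localizedMap _ S _ _ (E.d n)).symm

end LinearResolution

section FiniteFreeResolution

variable {R : Type u} [CommRing R]

noncomputable def finiteFreeCover (N : Type u) [AddCommGroup N] [Module R N]
    [Module.Finite R N] :
    Σ n : ℕ, (Fin n → R) →ₗ[R] N :=
  ⟨_, (Module.Finite.exists_fin' R N).choose_spec.choose⟩

lemma finiteFreeCover_surjective (N : Type u) [AddCommGroup N] [Module R N] [Module.Finite R N] :
    Function.Surjective (finiteFreeCover (R := R) N).2 :=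
  (Module.Finite.exists_fin' R N).choose_spec.choose_spec

variable [IsNoetherianRing R]

noncomputable def finiteFreeSyzygy (M : Type u) [AddCommGroup M] [Module R M]
    [Module.Finite R M] :
    ℕ → Σ n : ℕ, Submodule R (Fin n → R)
  | 0 => ⟨_, LinearMap.ker (finiteFreeCover (R := R) M).2⟩
  | k + 1 => ⟨_, LinearMap.ker (finiteFreeCover (finiteFreeSyzygy M k).2).2⟩

theorem LinearResolution.exists_finite_free (M : ModuleCat.{u} R) [Module.Finite R M] :
    ∃ E : LinearResolution M, ∀ n, Module.Free R (E.X n) ∧ Module.Finite R (E.X n) := by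
  let K := finiteFreeSyzygy (R := R) M
  refine ⟨{ X n := ModuleCat.of R (Fin (K n).1 → R)
            d n := (K n).2.subtype ∘ₗ (finiteFreeCover (K n).2).2
            π := (finiteFreeCover M).2
            surjective_π := finiteFreeCover_surjective M
            exact_zero := (finiteFreeCover_surjective (K 0).2).comp_exact_iff_exact.mpr
              (LinearMap.exact_subtype_ker_map _)
            exact_succ n := (Submodule.injective_subtype _).comp_exact_iff_exact.mpr
              ((finiteFreeCover_surjective (K (n + 1)).2).comp_exact_iff_exact.mpr
                (LinearMap.exact_subtype_ker_map _)) },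
    fun n => ⟨inferInstanceAs (Module.Free R (Fin _ → R)),
      inferInstanceAs (Module.Finite R (Fin _ → R))⟩⟩

end FiniteFreeResolution

/-- `S⁻¹(ca_R^n(M)) = ca_{S⁻¹R}^n(S⁻¹M)` for `n ≥ 1`. -/
theorem stmt4 (R : Type u) [CommRing R] [IsNoetherianRing R]
    (M : ModuleCat.{u} R) [Module.Finite R M] (S : Submonoid R) (n : ℕ) (hn : 1 ≤ n) :
    Ideal.map (algebraMap R (Localization S)) (caN R n M) =
      caN (Localization S) n (ModuleCat.of (Localization S) (LocalizedModule S M)) := by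
  obtain ⟨j, rfl⟩ : ∃ j, n = j + 1 := ⟨n - 1, by omega⟩
  obtain ⟨E, hE⟩ := LinearResolution.exists_finite_free M
  have (i : ℕ) : Module.Free R (E.X i) := (hE i).1
  have (i : ℕ) : Module.Finite R (E.X i) := (hE i).2
  have := Module.finitePresentation_of_finite R (E.X j)
  rw [E.caN_succ_eq_retractionIdeal, (E.localized S).caN_succ_eq_retractionIdeal,
    E.range_localized_d, Submodule.map_retractionIdeal_localized']
end

section
/- Let R be a commutative Noetherian ring and M a finitely generated R-module such that Ext_R^i(M,R) = 0 for all m ≤ i ≤ n. Then ca_R^m(M) = ca_R^{m+1}(M) = ⋯ = ca_R^{n+1}(M). -/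
open CategoryTheory

/-! For finitely generated `N` choose `0 → K → Rᵗ → N → 0`; `K` is finitely generated because `R`
is Noetherian. If `Extⁱ(M, R) = 0` then `Extⁱ(M, Rᵗ) = 0`, so the connecting map
`Extⁱ(M, N) → Extⁱ⁺¹(M, K)` is injective and every `r ∈ caⁱ⁺¹(M)` kills `Extⁱ(M, N)`. Hence
`caⁱ⁺¹(M) ⊆ caⁱ(M)` for `m ≤ i ≤ n`, and the reverse inclusions hold for any module.

Since Mathlib's `Ext` is derived in the first variable, the long exact sequence in the second
variable comes from the short exact sequence of Hom complexes out of a projective resolution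
of `M`. -/

open CategoryTheory Limits

section HomComplex

variable {R : Type*} [Ring R] {C : Type*} [Category* C] [Abelian C] [Linear R C]

variable (R) in
lemma CategoryTheory.ShortComplex.ShortExact.map_linearCoyoneda_obj {S : ShortComplex C}
    (hS : S.ShortExact) (P : C) [Projective P] :
    (S.map ((linearCoyoneda R C).obj (Opposite.op P))).ShortExact := by
  have := hS.mono_f
  have := hS.epi_g
  refine ModuleCat.shortComplex_shortExact _ (fun (g : P ⟶ S.X₂) ↦ ⟨fun hg ↦ ?_, ?_⟩)
    (fun (g g' : P ⟶ S.X₁) h ↦ (cancel_mono S.f).mp h)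
    (fun (g : P ⟶ S.X₃) ↦ ⟨Projective.factorThru g S.g, Projective.factorThru_comp g S.g⟩)
  · exact ⟨hS.exact.lift g hg, hS.exact.lift_f g hg⟩
  · rintro ⟨h, rfl⟩
    exact (Category.assoc h S.f S.g).trans (by rw [S.zero]; exact comp_zero)

namespace ChainComplex

variable (R) (K : ChainComplex C ℕ)

def linearYonedaObjMap {Y Y' : C} (f : Y ⟶ Y') :
    K.linearYonedaObj R Y ⟶ K.linearYonedaObj R Y' where
  f j := ((linearCoyoneda R C).obj (Opposite.op (K.X j))).map f
  comm' i j _ := by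
    ext (g : K.X i ⟶ Y)
    exact (Category.assoc (K.d j i) g f).symm

def linearYonedaObjShortComplex (S : ShortComplex C) :
    ShortComplex (CochainComplex (ModuleCat R) ℕ) :=
  ShortComplex.mk (K.linearYonedaObjMap R S.f) (K.linearYonedaObjMap R S.g) (by
    ext j (g : K.X j ⟶ S.X₁)
    exact (Category.assoc g S.f S.g).trans (by rw [S.zero]; exact comp_zero))

variable {R K} in
lemma shortExact_linearYonedaObjShortComplex [∀ j, Projective (K.X j)] {S : ShortComplex C}
    (hS : S.ShortExact) : (K.linearYonedaObjShortComplex R S).ShortExact :=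
  HomologicalComplex.shortExact_of_degreewise_shortExact _ fun j ↦
    hS.map_linearCoyoneda_obj R (K.X j)

end ChainComplex

end HomComplex

section ExtLongExactSequence

variable {R : Type*} [Ring R] {C : Type*} [Category* C] [Abelian C] [Linear R C]
  [EnoughProjectives C] (X : C)

lemma isZero_Ext_of_isZero {Y : C} (hY : IsZero Y) (n : ℕ) :
    IsZero (((Ext R C n).obj (Opposite.op X)).obj Y) := by
  let P := ProjectiveResolution.of X
  have : Subsingleton ((P.complex.linearYonedaObj R Y).X n) :=
    ⟨fun a b ↦ hY.eq_of_tgt (a : P.complex.X n ⟶ Y) b⟩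
  have hzero : IsZero ((P.complex.linearYonedaObj R Y).X n) := ModuleCat.isZero_of_subsingleton _
  exact ((HomologicalComplex.exactAt_iff (P.complex.linearYonedaObj R Y) n).2
    (ShortComplex.exact_of_isZero_X₂ _ hzero)).isZero_homology.of_iso (P.isoExt n Y)

lemma isZero_Ext_of_shortExact {S : ShortComplex C} (hS : S.ShortExact) (n : ℕ)
    (h₁ : IsZero (((Ext R C n).obj (Opposite.op X)).obj S.X₁))
    (h₃ : IsZero (((Ext R C n).obj (Opposite.op X)).obj S.X₃)) :
    IsZero (((Ext R C n).obj (Opposite.op X)).obj S.X₂) := by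
  let P := ProjectiveResolution.of X
  have hT := P.complex.shortExact_linearYonedaObjShortComplex (R := R) hS
  exact ((hT.homology_exact₂ n).isZero_of_both_isZero (h₁.of_iso (P.isoExt n _).symm)
    (h₃.of_iso (P.isoExt n _).symm)).of_iso (P.isoExt n _)

lemma annihilator_Ext_succ_le {S : ShortComplex C} (hS : S.ShortExact) (n : ℕ)
    (h₂ : IsZero (((Ext R C n).obj (Opposite.op X)).obj S.X₂)) :
    Module.annihilator R (((Ext R C (n + 1)).obj (Opposite.op X)).obj S.X₁) ≤
      Module.annihilator R (((Ext R C n).obj (Opposite.op X)).obj S.X₃) := by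
  let P := ProjectiveResolution.of X
  have hT := P.complex.shortExact_linearYonedaObjShortComplex (R := R) hS
  have := hT.mono_δ n (n + 1) rfl (h₂.of_iso (P.isoExt n _).symm)
  calc Module.annihilator R (((Ext R C (n + 1)).obj (Opposite.op X)).obj S.X₁)
      = Module.annihilator R ((P.complex.linearYonedaObj R S.X₁).homology (n + 1)) :=
        (P.isoExt (n + 1) S.X₁).toLinearEquiv.annihilator_eq
    _ ≤ Module.annihilator R ((P.complex.linearYonedaObj R S.X₃).homology n) :=
        (hT.δ n (n + 1) rfl).hom.annihilator_le_of_injective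
          ((ModuleCat.mono_iff_injective _).1 this)
    _ = Module.annihilator R (((Ext R C n).obj (Opposite.op X)).obj S.X₃) :=
        (P.isoExt n S.X₃).toLinearEquiv.annihilator_eq.symm

end ExtLongExactSequence

section ModuleCat

variable {R : Type u} [CommRing R] (M : ModuleCat.{u} R)

lemma isZero_ExtM_pi {n : ℕ} (h : IsZero (ExtM R n M (ModuleCat.of R R))) (t : ℕ) :
    IsZero (ExtM R n M (ModuleCat.of R (Fin t → R))) := by
  induction t with
  | zero => exact isZero_Ext_of_isZero M (ModuleCat.isZero_of_subsingleton _) n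
  | succ t ih =>
    let e : ModuleCat.of R (Fin (t + 1) → R) ≅ ModuleCat.of R R ⊞ ModuleCat.of R (Fin t → R) :=
      (Fin.consLinearEquiv R fun _ ↦ R).symm.toModuleIso ≪≫
        (ModuleCat.biprodIsoProd (.of R R) (.of R (Fin t → R))).symm
    exact (isZero_Ext_of_shortExact M (ShortComplex.Splitting.ofHasBinaryBiproduct _ _).shortExact
      n h ih).of_iso (((Ext R _ n).obj (Opposite.op M)).mapIso e)

lemma mem_caN_iff {k : ℕ} {r : R} :
    r ∈ caN R k M ↔ ∀ i, k ≤ i → ∀ N : ModuleCat.{u} R, Module.Finite R N →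
      r ∈ Module.annihilator R (ExtM R i M N) := by
  simp only [Module.mem_annihilator]
  rfl

lemma caN_mono {k l : ℕ} (hkl : k ≤ l) : caN R k M ≤ caN R l M := fun _ hr i hi ↦
  hr i (hkl.trans hi)

lemma caN_succ_le [IsNoetherianRing R] {n : ℕ} (h : IsZero (ExtM R n M (ModuleCat.of R R))) :
    caN R (n + 1) M ≤ caN R n M := by
  intro r hr
  rw [mem_caN_iff] at hr ⊢
  intro i hi N hN
  rcases hi.eq_or_lt with rfl | hlt
  · obtain ⟨t, f, hf⟩ := Module.Finite.exists_fin' R N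
    have : Module.Finite R (LinearMap.ker f) :=
      Module.Finite.iff_fg.mpr (IsNoetherian.noetherian _)
    exact annihilator_Ext_succ_le M (f.shortExact_shortComplexKer hf) n (isZero_ExtM_pi M h t)
      (hr _ le_rfl _ this)
  · exact hr i hlt N hN

end ModuleCat

theorem stmt6_general (R : Type u) [CommRing R] [IsNoetherianRing R]
    (M : ModuleCat.{u} R) (m n : ℕ)
    (h : ∀ i, m ≤ i → i ≤ n → Subsingleton (ExtM R i M (ModuleCat.of R R))) :
    ∀ k, m ≤ k → k ≤ n + 1 → caN R m M = caN R k M := by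
  intro k hmk hkn
  refine le_antisymm (caN_mono M hmk) ?_
  induction k, hmk using Nat.le_induction with
  | base => exact le_rfl
  | succ k hmk ih =>
    have := h k hmk (by omega)
    exact (caN_succ_le M (ModuleCat.isZero_of_subsingleton _)).trans (ih (by omega))

/-- if `Ext^i(M,R) = 0` for `m ≤ i ≤ n`, then
`ca_R^m(M) = ca_R^{m+1}(M) = ⋯ = ca_R^{n+1}(M)`. -/
theorem stmt6 (R : Type u) [CommRing R] [IsNoetherianRing R]
    (M : ModuleCat.{u} R) [Module.Finite R M] (m n : ℕ) (hmn : m ≤ n)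
    (h : ∀ i, m ≤ i → i ≤ n → Subsingleton (ExtM R i M (ModuleCat.of R R))) :
    ∀ k, m ≤ k → k ≤ n + 1 → caN R m M = caN R k M :=
  stmt6_general R M m n h
end
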